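/- There exists a constant c > 0 such that for every real Hilbert space H, every T > 0, every integer M ≥ 2, with Δt = T/M and t_m = mΔt, and every four times continuously differentiable f : [0,T] → H, one has Δt · Σ_{m=1}^{M−1} ‖ s_m ‖² ≤ c Δt⁴ ∫₀^T ‖f''''(t)‖² dt, where s_m = (1/4) f''(t_{m+1}) + (1/2) f''(t_m) + (1/4) f''(t_{m−1}) − ( f(t_{m+1}) − 2 f(t_m) + f(t_{m−1}) ) / Δt². -/

import Mathlib

/-!
Expanding `f''` to first order and `f` to third order about `t_m`, with integral remainders,
writes `s_m` as a sum of integrals of `f''''` against kernels bounded by `Δt/4` and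
`Δt/6` on `[t_{m-1}, t_{m+1}]`, so `‖s_m‖ ≤ (5Δt/12) ∫ ‖f''''‖` over that window.
Cauchy–Schwarz on a window of length `2Δt` gives `‖s_m‖² ≤ (25/72) Δt³ ∫ ‖f''''‖²`, and
the windows cover `[0, T]` at most twice.
-/

open MeasureTheory Set intervalIntegral

theorem sq_intervalIntegral_le_mul_intervalIntegral_sq {a b : ℝ} (hab : a ≤ b) {g : ℝ → ℝ}
    (hg : IntervalIntegrable g volume a b)
    (hg2 : IntervalIntegrable (fun t => g t ^ 2) volume a b) :
    (∫ t in a..b, g t) ^ 2 ≤ (b - a) * ∫ t in a..b, g t ^ 2 := by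
  have hquad : ∀ x : ℝ,
      0 ≤ (b - a) * (x * x) + (2 * ∫ t in a..b, g t) * x + ∫ t in a..b, g t ^ 2 := by
    intro x
    have hexpand : ∫ t in a..b, (g t + x) ^ 2
        = (b - a) * (x * x) + (2 * ∫ t in a..b, g t) * x + ∫ t in a..b, g t ^ 2 := by
      simp only [add_sq]
      rw [integral_add (hg2.add (hg.const_mul 2 |>.mul_const x)) intervalIntegrable_const,
        integral_add hg2 (hg.const_mul 2 |>.mul_const x), intervalIntegral.integral_mul_const,
        intervalIntegral.integral_const_mul, intervalIntegral.integral_const, smul_eq_mul]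
      ring
    rw [← hexpand]
    exact integral_nonneg hab fun t _ => sq_nonneg _
  have := discrim_le_zero hquad
  rw [discrim] at this
  linarith

theorem sum_integral_sub_one_add_one_le_two_mul {t : ℕ → ℝ} (ht : Monotone t) {G : ℝ → ℝ}
    (hG : 0 ≤ G) {M : ℕ} (hM : 1 ≤ M) (hint : IntervalIntegrable G volume (t 0) (t M)) :
    ∑ m ∈ Finset.Ico 1 M, ∫ x in t (m - 1)..t (m + 1), G x ≤ 2 * ∫ x in t 0..t M, G x := by
  have hsub : ∀ {i j : ℕ}, i ≤ j → j ≤ M → IntervalIntegrable G volume (t i) (t j) :=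
    fun {i j} hij hjM => hint.mono_set <| by
      rw [uIcc_of_le (ht hij), uIcc_of_le (ht (Nat.zero_le M))]
      exact Icc_subset_Icc (ht (Nat.zero_le i)) (ht hjM)
  have hmono : ∀ {i j : ℕ}, i ≤ j → j ≤ M → ∫ x in t i..t j, G x ≤ ∫ x in t 0..t M, G x :=
    fun hij hjM => integral_mono_interval (ht (Nat.zero_le _)) (ht hij) (ht hjM)
      (ae_of_all _ hG) hint
  have hleft : ∑ m ∈ Finset.Ico 1 M, ∫ x in t (m - 1)..t m, G x
      = ∫ x in t 0..t (M - 1), G x := by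
    simpa using sum_integral_adjacent_intervals_Ico (a := fun k => t (k - 1)) (μ := volume) hM
      fun k hk => hsub (Nat.sub_le k 1) (by rw [mem_Ico] at hk; omega)
  have hright : ∑ m ∈ Finset.Ico 1 M, ∫ x in t m..t (m + 1), G x = ∫ x in t 1..t M, G x :=
    sum_integral_adjacent_intervals_Ico hM fun k hk => hsub (Nat.le_succ k) hk.2
  calc ∑ m ∈ Finset.Ico 1 M, ∫ x in t (m - 1)..t (m + 1), G x
      = ∑ m ∈ Finset.Ico 1 M,
          ((∫ x in t (m - 1)..t m, G x) + ∫ x in t m..t (m + 1), G x) := by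
        refine Finset.sum_congr rfl fun m hm => ?_
        rw [Finset.mem_Ico] at hm
        exact (integral_add_adjacent_intervals (hsub (Nat.sub_le m 1) hm.2.le)
          (hsub (Nat.le_succ m) hm.2)).symm
    _ ≤ 2 * ∫ x in t 0..t M, G x := by
        rw [Finset.sum_add_distrib, hleft, hright]
        linarith [hmono (Nat.zero_le (M - 1)) (Nat.sub_le M 1), hmono hM le_rfl]

section

variable {E : Type*} [NormedAddCommGroup E] [NormedSpace ℝ E] {s : Set ℝ} {a b : ℝ}

theorem norm_integral_smul_le_of_abs_le {c : ℝ → ℝ} {v : ℝ → E} {K : ℝ}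
    (hv : IntervalIntegrable v volume a b) (hc : ∀ t ∈ uIcc a b, |c t| ≤ K) :
    ‖∫ t in a..b, c t • v t‖ ≤ K * |∫ t in a..b, ‖v t‖| := by
  wlog hab : a ≤ b generalizing a b
  · have := this hv.symm (uIcc_comm a b ▸ hc) (le_of_not_ge hab)
    rwa [integral_symm b a, norm_neg, integral_symm b a, abs_neg]
  rw [abs_of_nonneg (integral_nonneg hab fun _ _ => norm_nonneg _),
    ← intervalIntegral.integral_const_mul]
  refine norm_integral_le_of_norm_le hab (ae_of_all _ fun t ht => ?_) (hv.norm.const_mul K)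
  rw [norm_smul, Real.norm_eq_abs]
  exact mul_le_mul_of_nonneg_right (hc t (uIcc_of_le hab ▸ Ioc_subset_Icc_self ht))
    (norm_nonneg _)

variable (f f' f'' f''' f'''' : ℝ → E)

/-- The paper's `s_m` is `consistencyError f f'' t_m Δt`. -/
noncomputable def consistencyError (x h : ℝ) : E :=
  (1 / 4 : ℝ) • f'' (x + h) + (1 / 2 : ℝ) • f'' x + (1 / 4 : ℝ) • f'' (x - h)
    - ((h ^ 2)⁻¹ : ℝ) • (f (x + h) - (2 : ℝ) • f x + f (x - h))

noncomputable def oneSidedConsistencyError (x k : ℝ) : E :=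
  (1 / 4 : ℝ) • (f'' (x + k) - f'' x - k • f''' x)
    - ((k ^ 2)⁻¹ : ℝ) •
      (f (x + k) - f x - k • f' x - (k ^ 2 / 2) • f'' x - (k ^ 3 / 6) • f''' x)

theorem consistencyError_eq_add {h : ℝ} (hh : h ≠ 0) (x : ℝ) :
    consistencyError f f'' x h
      = oneSidedConsistencyError f f' f'' f''' x h
        + oneSidedConsistencyError f f' f'' f''' x (-h) := by
  simp only [consistencyError, oneSidedConsistencyError, ← sub_eq_add_neg, neg_sq,
    Odd.neg_pow (by decide : Odd 3)]
  match_scalars <;> field_simp <;> ring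

variable [CompleteSpace E] {f f' f'' f''' f''''}

theorem integral_eq_sub_of_hasDerivWithinAt_of_uIcc_subset {u v : ℝ → E} (hs : uIcc a b ⊆ s)
    (hu : ∀ t ∈ uIcc a b, HasDerivWithinAt u (v t) s t) (hv : ContinuousOn v (uIcc a b)) :
    ∫ t in a..b, v t = u b - u a :=
  integral_eq_sub_of_hasDeriv_right (fun t ht => (hu t ht).continuousWithinAt.mono hs)
    (fun t ht => ((hu t (Ioo_subset_Icc_self ht)).hasDerivAt (Filter.mem_of_superset
      (Ioo_mem_nhds ht.1 ht.2) (Ioo_subset_Icc_self.trans hs))).hasDerivWithinAt)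
    hv.intervalIntegrable

theorem taylor_integral_remainder_one {g g' g'' : ℝ → E} (hs : uIcc a b ⊆ s)
    (hg : ∀ t ∈ s, HasDerivWithinAt g (g' t) s t)
    (hg' : ∀ t ∈ s, HasDerivWithinAt g' (g'' t) s t) (hg'' : ContinuousOn g'' s) :
    g b - g a - (b - a) • g' a = ∫ t in a..b, (b - t) • g'' t := by
  rw [integral_eq_sub_of_hasDerivWithinAt_of_uIcc_subset (u := fun t => g t + (b - t) • g' t)
    (v := fun t => (b - t) • g'' t) hs (fun t ht => ?_)
    ((continuousOn_const.sub continuousOn_id).smul (hg''.mono hs))]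
  · module
  · have hlin : HasDerivWithinAt (fun y : ℝ => b - y) (-1) s t := by
      simpa using (hasDerivWithinAt_id t s).const_sub b
    exact ((hg t (hs ht)).add (hlin.smul (hg' t (hs ht)))).congr_deriv (by module)

theorem taylor_integral_remainder_three {g g' g'' g''' g'''' : ℝ → E} (hs : uIcc a b ⊆ s)
    (hg : ∀ t ∈ s, HasDerivWithinAt g (g' t) s t)
    (hg' : ∀ t ∈ s, HasDerivWithinAt g' (g'' t) s t)
    (hg'' : ∀ t ∈ s, HasDerivWithinAt g'' (g''' t) s t)
    (hg''' : ∀ t ∈ s, HasDerivWithinAt g''' (g'''' t) s t) (hg'''' : ContinuousOn g'''' s) :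
    g b - g a - (b - a) • g' a - ((b - a) ^ 2 / 2) • g'' a - ((b - a) ^ 3 / 6) • g''' a
      = ∫ t in a..b, ((b - t) ^ 3 / 6) • g'''' t := by
  rw [integral_eq_sub_of_hasDerivWithinAt_of_uIcc_subset
    (u := fun t =>
      g t + (b - t) • g' t + ((b - t) ^ 2 / 2) • g'' t + ((b - t) ^ 3 / 6) • g''' t)
    (v := fun t => ((b - t) ^ 3 / 6) • g'''' t) hs (fun t ht => ?_)
    ((Continuous.continuousOn (by fun_prop)).smul (hg''''.mono hs))]
  · module
  · have h1 : HasDerivWithinAt (fun y : ℝ => b - y) (-1) s t := by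
      simpa using (hasDerivWithinAt_id t s).const_sub b
    have h2 : HasDerivWithinAt (fun y : ℝ => (b - y) ^ 2 / 2) (-(b - t)) s t :=
      ((h1.pow 2).div_const 2).congr_deriv (by push_cast; ring)
    have h3 : HasDerivWithinAt (fun y : ℝ => (b - y) ^ 3 / 6) (-((b - t) ^ 2 / 2)) s t :=
      ((h1.pow 3).div_const 6).congr_deriv (by push_cast; ring)
    exact (((hg t (hs ht)).add (h1.smul (hg' t (hs ht)))).add (h2.smul (hg'' t (hs ht)))
      |>.add (h3.smul (hg''' t (hs ht)))).congr_deriv (by module)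

section Derivatives

variable (hf : ∀ t ∈ s, HasDerivWithinAt f (f' t) s t)
  (hf' : ∀ t ∈ s, HasDerivWithinAt f' (f'' t) s t)
  (hf'' : ∀ t ∈ s, HasDerivWithinAt f'' (f''' t) s t)
  (hf''' : ∀ t ∈ s, HasDerivWithinAt f''' (f'''' t) s t) (hf'''' : ContinuousOn f'''' s)
include hf hf' hf'' hf''' hf''''

theorem norm_oneSidedConsistencyError_le {x k : ℝ} (hs : uIcc x (x + k) ⊆ s) :
    ‖oneSidedConsistencyError f f' f'' f''' x k‖
      ≤ 5 * |k| / 12 * |∫ t in x..x + k, ‖f'''' t‖| := by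
  have hR1 := taylor_integral_remainder_one hs hf'' hf''' hf''''
  have hR3 := taylor_integral_remainder_three hs hf hf' hf'' hf''' hf''''
  rw [add_sub_cancel_left] at hR1 hR3
  rw [oneSidedConsistencyError, hR1, hR3]
  set J := |∫ t in x..x + k, ‖f'''' t‖|
  have hint : IntervalIntegrable f'''' volume x (x + k) := (hf''''.mono hs).intervalIntegrable
  have hkernel : ∀ n : ℕ, ∀ t ∈ uIcc x (x + k), |(x + k - t) ^ n| ≤ |k| ^ n :=
    fun n t ht => by
      rw [abs_pow]
      exact pow_le_pow_left₀ (abs_nonneg _)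
        ((abs_sub_right_of_mem_uIcc ht).trans_eq (by rw [add_sub_cancel_left])) n
  have hR1_le : ‖∫ t in x..x + k, (x + k - t) • f'''' t‖ ≤ |k| * J :=
    norm_integral_smul_le_of_abs_le hint fun t ht => by simpa using hkernel 1 t ht
  have hR3_le : ‖∫ t in x..x + k, ((x + k - t) ^ 3 / 6) • f'''' t‖ ≤ |k| ^ 3 / 6 * J :=
    norm_integral_smul_le_of_abs_le hint fun t ht => by
      rw [abs_div, abs_of_pos (by norm_num : (0 : ℝ) < 6)]
      gcongr
      exact hkernel 3 t ht
  have hscale : (k ^ 2)⁻¹ * |k| ^ 3 ≤ |k| := by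
    rcases eq_or_ne k 0 with rfl | hk
    · simp
    · rw [show |k| ^ 3 = |k| ^ 2 * |k| by ring, sq_abs, ← mul_assoc,
        inv_mul_cancel₀ (pow_ne_zero 2 hk), one_mul]
  calc _ ≤ 1 / 4 * ‖∫ t in x..x + k, (x + k - t) • f'''' t‖
        + (k ^ 2)⁻¹ * ‖∫ t in x..x + k, ((x + k - t) ^ 3 / 6) • f'''' t‖ := by
        refine (norm_sub_le _ _).trans_eq ?_
        rw [norm_smul, norm_smul, Real.norm_of_nonneg (by norm_num),
          Real.norm_of_nonneg (by positivity)]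
    _ ≤ 1 / 4 * (|k| * J) + (k ^ 2)⁻¹ * (|k| ^ 3 / 6 * J) := by gcongr
    _ ≤ 5 * |k| / 12 * J := by
        have hJ : 0 ≤ J := abs_nonneg _
        nlinarith

theorem norm_consistencyError_le {x h : ℝ} (hh : 0 < h) (hs : Icc (x - h) (x + h) ⊆ s) :
    ‖consistencyError f f'' x h‖ ≤ 5 * h / 12 * ∫ t in x - h..x + h, ‖f'''' t‖ := by
  have hs_right : uIcc x (x + h) ⊆ s :=
    (uIcc_of_le (by linarith)).trans_subset ((Icc_subset_Icc (by linarith) le_rfl).trans hs)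
  have hs_left : uIcc (x - h) x ⊆ s :=
    (uIcc_of_le (by linarith)).trans_subset ((Icc_subset_Icc le_rfl (by linarith)).trans hs)
  have hsplit := integral_add_adjacent_intervals (μ := volume)
    (hf''''.mono hs_left).norm.intervalIntegrable (hf''''.mono hs_right).norm.intervalIntegrable
  have hright := norm_oneSidedConsistencyError_le hf hf' hf'' hf''' hf'''' hs_right
  have hleft := norm_oneSidedConsistencyError_le hf hf' hf'' hf''' hf'''' (k := -h)
    (by rwa [uIcc_comm, ← sub_eq_add_neg])
  rw [abs_neg, ← sub_eq_add_neg, integral_symm, abs_neg] at hleft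
  rw [abs_of_pos hh] at hright hleft
  rw [abs_of_nonneg (integral_nonneg (by linarith) fun _ _ => norm_nonneg _)] at hright hleft
  rw [consistencyError_eq_add f f' f'' f''' hh.ne', ← hsplit]
  calc _ ≤ _ := norm_add_le _ _
    _ ≤ _ := add_le_add hright hleft
    _ = _ := by ring

theorem sq_norm_consistencyError_le {x h : ℝ} (hh : 0 < h) (hs : Icc (x - h) (x + h) ⊆ s) :
    ‖consistencyError f f'' x h‖ ^ 2
      ≤ 25 / 72 * h ^ 3 * ∫ t in x - h..x + h, ‖f'''' t‖ ^ 2 := by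
  have hcont : ContinuousOn (fun t => ‖f'''' t‖) (uIcc (x - h) (x + h)) :=
    (hf''''.mono (uIcc_of_le (by linarith : x - h ≤ x + h) ▸ hs)).norm
  have hCS := sq_intervalIntegral_le_mul_intervalIntegral_sq (by linarith : x - h ≤ x + h)
    hcont.intervalIntegrable (hcont.pow 2).intervalIntegrable
  calc ‖consistencyError f f'' x h‖ ^ 2
      ≤ (5 * h / 12 * ∫ t in x - h..x + h, ‖f'''' t‖) ^ 2 :=
        pow_le_pow_left₀ (norm_nonneg _)
          (norm_consistencyError_le hf hf' hf'' hf''' hf'''' hh hs) 2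
    _ = 25 * h ^ 2 / 144 * (∫ t in x - h..x + h, ‖f'''' t‖) ^ 2 := by ring
    _ ≤ 25 * h ^ 2 / 144 * ((x + h - (x - h)) * ∫ t in x - h..x + h, ‖f'''' t‖ ^ 2) := by
        gcongr
    _ = 25 / 72 * h ^ 3 * ∫ t in x - h..x + h, ‖f'''' t‖ ^ 2 := by ring

end Derivatives

end

/-- Aggregated second-order consistency estimate of Lemma 3.4 of the paper: there is
a universal constant `c > 0` such that for every real Hilbert space, every time step
`Δt = T/M` and every `C⁴` function `f : [0,T] → H`,
`Δt Σ_{m=1}^{M−1} ‖s_m‖² ≤ c Δt⁴ ∫₀^T ‖f''''‖²`, where `s_m` is the consistency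
error of the (1/4, 1/2, 1/4) scheme. -/
theorem stmt12 :
    ∃ c : ℝ, 0 < c ∧
      ∀ (H : Type) [inst₁ : NormedAddCommGroup H] [inst₂ : InnerProductSpace ℝ H]
        [inst₃ : CompleteSpace H],
        ∀ (T : ℝ), 0 < T → ∀ (M : ℕ), 2 ≤ M →
        ∀ (f f' f'' f''' f'''' : ℝ → H),
          (∀ s ∈ Set.Icc (0 : ℝ) T, HasDerivWithinAt f (f' s) (Set.Icc 0 T) s) →
          (∀ s ∈ Set.Icc (0 : ℝ) T, HasDerivWithinAt f' (f'' s) (Set.Icc 0 T) s) →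
          (∀ s ∈ Set.Icc (0 : ℝ) T, HasDerivWithinAt f'' (f''' s) (Set.Icc 0 T) s) →
          (∀ s ∈ Set.Icc (0 : ℝ) T, HasDerivWithinAt f''' (f'''' s) (Set.Icc 0 T) s) →
          ContinuousOn f'''' (Set.Icc 0 T) →
          (T / M) * ∑ m ∈ Finset.Icc 1 (M - 1),
              ‖(1 / 4 : ℝ) • f'' (((m : ℝ) + 1) * (T / M))
                  + (1 / 2 : ℝ) • f'' ((m : ℝ) * (T / M))
                  + (1 / 4 : ℝ) • f'' (((m : ℝ) - 1) * (T / M))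
                  - (((T / M) ^ 2)⁻¹ : ℝ) •
                      (f (((m : ℝ) + 1) * (T / M)) - (2 : ℝ) • f ((m : ℝ) * (T / M))
                        + f (((m : ℝ) - 1) * (T / M)))‖ ^ 2
            ≤ c * (T / M) ^ 4 * ∫ s in (0 : ℝ)..T, ‖f'''' s‖ ^ 2 := by
  refine ⟨25 / 36, by norm_num,
    fun H _ _ _ T hT M hM f f' f'' f''' f'''' hf hf' hf'' hf''' hf'''' => ?_⟩
  set Δ := T / M
  have hΔ : 0 < Δ := div_pos hT (by positivity)
  set t : ℕ → ℝ := fun k => k * Δ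
  have ht : Monotone t := fun i j hij => mul_le_mul_of_nonneg_right (Nat.cast_le.2 hij) hΔ.le
  have ht0 : t 0 = 0 := by simp [t]
  have htM : t M = T := by simp only [t, Δ]; field_simp
  have hterm : ∀ m ∈ Finset.Ico 1 M, ‖consistencyError f f'' (m * Δ) Δ‖ ^ 2
      ≤ 25 / 72 * Δ ^ 3 * ∫ x in t (m - 1)..t (m + 1), ‖f'''' x‖ ^ 2 := fun m hm => by
    rw [Finset.mem_Ico] at hm
    have hlo : t (m - 1) = m * Δ - Δ := by simp only [t]; rw [Nat.cast_sub hm.1]; ring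
    have hhi : t (m + 1) = m * Δ + Δ := by simp only [t]; push_cast; ring
    rw [hlo, hhi]
    refine sq_norm_consistencyError_le hf hf' hf'' hf''' hf'''' hΔ (Icc_subset_Icc ?_ ?_)
    · rw [← hlo, ← ht0]; exact ht (Nat.zero_le _)
    · rw [← hhi, ← htM]; exact ht hm.2
  have hint : IntervalIntegrable (fun x => ‖f'''' x‖ ^ 2) volume (t 0) (t M) := by
    rw [ht0, htM]
    exact ContinuousOn.intervalIntegrable (by rw [uIcc_of_le hT.le]; exact hf''''.norm.pow 2)
  calc _ = Δ * ∑ m ∈ Finset.Ico 1 M, ‖consistencyError f f'' (m * Δ) Δ‖ ^ 2 := by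
        rw [show Finset.Icc 1 (M - 1) = Finset.Ico 1 M by ext; simp; omega]
        simp only [consistencyError, add_one_mul, sub_one_mul]
    _ ≤ Δ * ∑ m ∈ Finset.Ico 1 M,
          25 / 72 * Δ ^ 3 * ∫ x in t (m - 1)..t (m + 1), ‖f'''' x‖ ^ 2 := by
        gcongr with m hm
        exact hterm m hm
    _ = 25 / 72 * Δ ^ 4 *
          ∑ m ∈ Finset.Ico 1 M, ∫ x in t (m - 1)..t (m + 1), ‖f'''' x‖ ^ 2 := by
        rw [← Finset.mul_sum]; ring
    _ ≤ 25 / 72 * Δ ^ 4 * (2 * ∫ x in t 0..t M, ‖f'''' x‖ ^ 2) := by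
        gcongr
        exact sum_integral_sub_one_add_one_le_two_mul ht (fun _ => sq_nonneg _) (by omega) hint
    _ = 25 / 36 * Δ ^ 4 * ∫ x in (0 : ℝ)..T, ‖f'''' x‖ ^ 2 := by
        rw [ht0, htM]; ring
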